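/- arXiv:1004.2639 — 2 statements merged into one kernel-verified Lean document; each statement's English description precedes it below -/
import Mathlib

section
/- Let M be an identically self-dual matroid on a finite ground set E, i.e. M = M*, where M* is the dual matroid of M. Then for every real number a ≥ 2, max{T_M(2a, 0), T_M(0, 2a)} ≥ T_M(a, a), where T_M denotes the Tutte polynomial of M. -/
open Matroid Set

variable {α : Type*}

/-- The rank of a set `X` in a matroid `M`:
the maximum size of an independent subset of `X`. -/
noncomputable def Matroid.rankSet (M : Matroid α) (X : Set α) : ℕ :=
  sSup {n | ∃ I ⊆ X, M.Indep I ∧ I.ncard = n}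

/-- The Tutte polynomial of a matroid `M` on a finite type, evaluated at `(x, y) : ℝ × ℝ`:
`T_M(x,y) = Σ_{A ⊆ E} (x−1)^{r(E)−r(A)} · (y−1)^{|A|−r(A)}`. -/
noncomputable def Matroid.tutte [Fintype α] (M : Matroid α) (x y : ℝ) : ℝ :=
  ∑ A ∈ M.E.toFinite.toFinset.powerset,
    (x - 1) ^ (M.rankSet M.E - M.rankSet ↑A) * (y - 1) ^ (A.card - M.rankSet ↑A)

/-! Self-duality makes the ground set the disjoint union of a basis `B` and its complement,
which is again a basis. Writing `A ⊆ E` as `X ∪ Z` with `X ⊆ B` and `Z ⊆ E \ B` expresses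
`T_M(x, y)` as the sum, over the `2^r` sets `X ⊆ B`, of the Tutte polynomials of the contractions
`(M / X) | (E \ B)`, each on `r` elements. Deletion–contraction bounds the Tutte polynomial of an
`n`-element matroid by `max(x, y)^n` for `x, y ≥ 2`, so `T_M(a, a) ≤ (2a)^r`. A self-dual matroid
has no loops, and deletion–contraction gives `x^r ≤ T_N(x, y)` for loopless `N` and `x, y ≥ 0`;
hence `(2a)^r ≤ T_M(2a, 0)`. -/

open Finset

lemma Finset.sum_powerset_union_of_disjoint {β M : Type*} [DecidableEq β] [AddCommMonoid M]
    {s t : Finset β} (hst : Disjoint s t) (f : Finset β → M) :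
    ∑ A ∈ (s ∪ t).powerset, f A = ∑ X ∈ s.powerset, ∑ Z ∈ t.powerset, f (X ∪ Z) := by
  rw [powerset_union]
  change ∑ A ∈ image₂ (· ⊔ ·) _ _, f A = _
  rw [← image_uncurry_product, sum_image, sum_product]
  · rfl
  have hsplit {X Z : Finset β} (hX : X ⊆ s) (hZ : Z ⊆ t) : (X ∪ Z) ∩ s = X ∧ (X ∪ Z) ∩ t = Z := by
    constructor <;> ext a <;> simp only [mem_inter, mem_union] <;> grind [disjoint_left]
  rintro ⟨X, Z⟩ hXZ ⟨X', Z'⟩ hXZ' heq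
  simp only [coe_product, Set.mem_prod, mem_coe, mem_powerset] at hXZ hXZ'
  obtain ⟨h1, h2⟩ := hsplit hXZ.1 hXZ.2
  obtain ⟨h1', h2'⟩ := hsplit hXZ'.1 hXZ'.2
  have heq' : X ∪ Z = X' ∪ Z' := heq
  exact Prod.ext (h1.symm.trans (by rw [heq', h1'])) (h2.symm.trans (by rw [heq', h2']))

section RankFunction

variable {β : Type*} {G I X s : Finset β} {g : β} {ρ : Finset β → ℕ} {x y : ℝ}

def tutteSum (G : Finset β) (ρ : Finset β → ℕ) (x y : ℝ) : ℝ :=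
  ∑ Z ∈ G.powerset, (x - 1) ^ (ρ G - ρ Z) * (y - 1) ^ (#Z - ρ Z)

@[simp]
lemma tutteSum_empty (ρ : Finset β → ℕ) (x y : ℝ) : tutteSum ∅ ρ x y = 1 := by
  simp [tutteSum]

variable [DecidableEq β]

structure IsRankFn (G : Finset β) (ρ : Finset β → ℕ) : Prop where
  le_card ⦃A : Finset β⦄ : A ⊆ G → ρ A ≤ #A
  mono ⦃A B : Finset β⦄ : A ⊆ B → B ⊆ G → ρ A ≤ ρ B
  submod ⦃A B : Finset β⦄ : A ⊆ G → B ⊆ G → ρ (A ∪ B) + ρ (A ∩ B) ≤ ρ A + ρ B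

def contractRank (ρ : Finset β → ℕ) (X W : Finset β) : ℕ := ρ (X ∪ W) - ρ X

namespace IsRankFn

lemma empty (hρ : IsRankFn G ρ) : ρ ∅ = 0 :=
  Nat.le_zero.mp (hρ.le_card (empty_subset G))

lemma insert_le (hρ : IsRankFn G ρ) {A : Finset β} {g : β} (hA : A ⊆ G) (hg : g ∈ G) :
    ρ (insert g A) ≤ ρ A + 1 := by
  have hsub := hρ.submod (singleton_subset_iff.mpr hg) hA
  have hg1 := hρ.le_card (singleton_subset_iff.mpr hg)
  rw [← Finset.insert_eq] at hsub
  rw [Finset.card_singleton] at hg1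
  omega

lemma restrict (hρ : IsRankFn G ρ) {G' : Finset β} (hG' : G' ⊆ G) : IsRankFn G' ρ where
  le_card _ hA := hρ.le_card (hA.trans hG')
  mono _ _ hAB hB := hρ.mono hAB (hB.trans hG')
  submod _ _ hA hB := hρ.submod (hA.trans hG') (hB.trans hG')

lemma eq_card_of_subset (hρ : IsRankFn G ρ) (hIG : I ⊆ G) (hI : ρ I = #I) (hXI : X ⊆ I) :
    ρ X = #X := by
  have hsub := hρ.submod (B := I \ X) (hXI.trans hIG) (sdiff_subset.trans hIG)
  rw [Finset.union_sdiff_of_subset hXI, Finset.inter_sdiff_self, hρ.empty, hI] at hsub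
  have := hρ.le_card (hXI.trans hIG)
  have := hρ.le_card (A := I \ X) (sdiff_subset.trans hIG)
  have := card_sdiff_add_card_eq_card hXI
  omega

lemma contract (hρ : IsRankFn G ρ) (hX : X ⊆ G) : IsRankFn (G \ X) (contractRank ρ X) where
  le_card A hA := by
    have hAG := hA.trans sdiff_subset
    have := hρ.submod hX hAG
    have := hρ.le_card hAG
    simp only [contractRank]
    omega
  mono A B hAB hB :=
    Nat.sub_le_sub_right (hρ.mono (union_subset_union_right hAB)
      (union_subset hX (hB.trans sdiff_subset))) _
  submod A B hA hB := by
    have hXA : X ∪ A ⊆ G := union_subset hX (hA.trans sdiff_subset)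
    have hXB : X ∪ B ⊆ G := union_subset hX (hB.trans sdiff_subset)
    have hsub := hρ.submod hXA hXB
    rw [← Finset.union_union_distrib_left, ← Finset.union_inter_distrib_left] at hsub
    have hle {W : Finset β} (hW : W ⊆ G \ X) : ρ X ≤ ρ (X ∪ W) :=
      hρ.mono subset_union_left (union_subset hX (hW.trans sdiff_subset))
    have := hle hA
    have := hle hB
    have := hle (union_subset hA hB)
    have := hle (W := A ∩ B) (Finset.inter_subset_left.trans hA)
    simp only [contractRank]
    omega

lemma contract_singleton (hρ : IsRankFn (insert g s) ρ) (hg : g ∉ s) :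
    IsRankFn s (contractRank ρ {g}) := by
  simpa [sdiff_singleton_eq_erase, erase_insert hg] using
    hρ.contract (singleton_subset_iff.mpr (mem_insert_self g s))

lemma loop_or_coloop_or_regular (hρ : IsRankFn (insert g s) ρ) :
    ρ {g} = 0 ∨ ρ (insert g s) = ρ s + 1 ∨ (ρ {g} = 1 ∧ ρ (insert g s) = ρ s) := by
  have hg1 := hρ.le_card (singleton_subset_iff.mpr (mem_insert_self g s))
  rw [Finset.card_singleton] at hg1
  have := hρ.mono (subset_insert g s) subset_rfl
  have := hρ.insert_le (subset_insert g s) (mem_insert_self g s)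
  omega

end IsRankFn

lemma tutteSum_insert_of_loop (hρ : IsRankFn (insert g s) ρ) (hg : g ∉ s) (hloop : ρ {g} = 0) :
    tutteSum (insert g s) ρ x y = y * tutteSum s ρ x y := by
  have hins {Z : Finset β} (hZ : Z ⊆ s) : ρ (insert g Z) = ρ Z := by
    have hsub := hρ.submod (singleton_subset_iff.mpr (mem_insert_self g s))
      (hZ.trans (subset_insert g s))
    rw [← Finset.insert_eq, Finset.singleton_inter_of_notMem (fun h ↦ hg (hZ h)), hρ.empty,
      hloop] at hsub
    have := hρ.mono (subset_insert g Z) (insert_subset_insert g hZ)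
    omega
  rw [tutteSum, tutteSum, sum_powerset_insert hg, hins subset_rfl, mul_sum, ← sum_add_distrib]
  refine sum_congr rfl fun Z hZ ↦ ?_
  rw [Finset.mem_powerset] at hZ
  have := hρ.le_card (hZ.trans (subset_insert g s))
  rw [hins hZ, card_insert_of_notMem (fun h ↦ hg (hZ h)),
    show #Z + 1 - ρ Z = #Z - ρ Z + 1 by omega, pow_succ]
  ring

lemma tutteSum_insert_of_coloop (hρ : IsRankFn (insert g s) ρ) (hg : g ∉ s)
    (hcoloop : ρ (insert g s) = ρ s + 1) :
    tutteSum (insert g s) ρ x y = x * tutteSum s ρ x y := by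
  have hins {Z : Finset β} (hZ : Z ⊆ s) : ρ (insert g Z) = ρ Z + 1 := by
    have hsub := hρ.submod (insert_subset_insert g hZ) (subset_insert g s)
    rw [Finset.insert_union, Finset.union_eq_right.mpr hZ, Finset.insert_inter_of_notMem hg,
      Finset.inter_eq_left.mpr hZ] at hsub
    have := hρ.insert_le (hZ.trans (subset_insert g s)) (mem_insert_self g s)
    omega
  rw [tutteSum, tutteSum, sum_powerset_insert hg, mul_sum, ← sum_add_distrib]
  refine sum_congr rfl fun Z hZ ↦ ?_
  rw [Finset.mem_powerset] at hZ
  have := hρ.mono hZ (subset_insert g s)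
  rw [hins hZ, card_insert_of_notMem (fun h ↦ hg (hZ h)), hcoloop,
    show ρ s + 1 - ρ Z = ρ s - ρ Z + 1 by omega, Nat.add_sub_add_right, Nat.add_sub_add_right,
    pow_succ]
  ring

lemma tutteSum_insert_eq_delete_add_contract (hρ : IsRankFn (insert g s) ρ) (hg : g ∉ s)
    (hnonloop : ρ {g} = 1) (hreg : ρ (insert g s) = ρ s) :
    tutteSum (insert g s) ρ x y = tutteSum s ρ x y + tutteSum s (contractRank ρ {g}) x y := by
  rw [tutteSum, tutteSum, tutteSum, sum_powerset_insert hg, hreg]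
  congr 1
  refine sum_congr rfl fun Z hZ ↦ ?_
  rw [Finset.mem_powerset] at hZ
  have := hρ.mono (singleton_subset_iff.mpr (mem_insert_self g Z)) (insert_subset_insert g hZ)
  simp only [contractRank, ← Finset.insert_eq, hreg, hnonloop]
  rw [card_insert_of_notMem (fun h ↦ hg (hZ h))]
  congr 2 <;> omega

theorem tutteSum_nonneg (hρ : IsRankFn G ρ) (hx : 0 ≤ x) (hy : 0 ≤ y) :
    0 ≤ tutteSum G ρ x y := by
  induction G using Finset.induction_on generalizing ρ with
  | empty => simp
  | insert g s hg ih =>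
    have hdel := ih (hρ.restrict (subset_insert g s))
    rcases hρ.loop_or_coloop_or_regular with hloop | hcoloop | ⟨hnonloop, hreg⟩
    · rw [tutteSum_insert_of_loop hρ hg hloop]
      exact mul_nonneg hy hdel
    · rw [tutteSum_insert_of_coloop hρ hg hcoloop]
      exact mul_nonneg hx hdel
    · rw [tutteSum_insert_eq_delete_add_contract hρ hg hnonloop hreg]
      exact add_nonneg hdel (ih (hρ.contract_singleton hg))

theorem pow_rank_le_tutteSum (hρ : IsRankFn G ρ) (hloopless : ∀ g ∈ G, ρ {g} = 1) (hx : 0 ≤ x)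
    (hy : 0 ≤ y) : x ^ ρ G ≤ tutteSum G ρ x y := by
  induction G using Finset.induction_on generalizing ρ with
  | empty => simp [hρ.empty]
  | insert g s hg ih =>
    have hdel := ih (hρ.restrict (subset_insert g s))
      fun h hh ↦ hloopless h (mem_insert_of_mem hh)
    rcases hρ.loop_or_coloop_or_regular with hloop | hcoloop | ⟨hnonloop, hreg⟩
    · have := hloopless g (mem_insert_self g s)
      omega
    · rw [tutteSum_insert_of_coloop hρ hg hcoloop, hcoloop, pow_succ']
      exact mul_le_mul_of_nonneg_left hdel hx
    · rw [tutteSum_insert_eq_delete_add_contract hρ hg hnonloop hreg, hreg]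
      exact le_add_of_le_of_nonneg hdel (tutteSum_nonneg (hρ.contract_singleton hg) hx hy)

theorem tutteSum_le_max_pow_card (hρ : IsRankFn G ρ) (hx : 2 ≤ x) (hy : 2 ≤ y) :
    tutteSum G ρ x y ≤ max x y ^ #G := by
  induction G using Finset.induction_on generalizing ρ with
  | empty => simp
  | insert g s hg ih =>
    have hdel := ih (hρ.restrict (subset_insert g s))
    have hnonneg := tutteSum_nonneg (x := x) (y := y) (hρ.restrict (subset_insert g s))
      (by linarith) (by linarith)
    have hm : 2 ≤ max x y := le_max_of_le_left hx
    rw [card_insert_of_notMem hg, pow_succ']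
    rcases hρ.loop_or_coloop_or_regular with hloop | hcoloop | ⟨hnonloop, hreg⟩
    · rw [tutteSum_insert_of_loop hρ hg hloop]
      exact mul_le_mul (le_max_right x y) hdel hnonneg (by positivity)
    · rw [tutteSum_insert_of_coloop hρ hg hcoloop]
      exact mul_le_mul (le_max_left x y) hdel hnonneg (by positivity)
    · rw [tutteSum_insert_eq_delete_add_contract hρ hg hnonloop hreg]
      have hcon := ih (hρ.contract_singleton hg)
      nlinarith [pow_nonneg (by positivity : (0 : ℝ) ≤ max x y) #s]

theorem tutteSum_union_eq_sum_contract {S : Finset β} (hρ : IsRankFn (I ∪ S) ρ)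
    (hIS : Disjoint I S) (hI : ρ I = #I) (hS : ρ S = ρ (I ∪ S)) (x y : ℝ) :
    tutteSum (I ∪ S) ρ x y = ∑ X ∈ I.powerset, tutteSum S (contractRank ρ X) x y := by
  rw [tutteSum, sum_powerset_union_of_disjoint hIS]
  refine sum_congr rfl fun X hX ↦ sum_congr rfl fun Z hZ ↦ ?_
  rw [Finset.mem_powerset] at hX hZ
  have hXZ : X ∪ Z ⊆ I ∪ S := union_subset_union hX hZ
  have hXS : X ∪ S ⊆ I ∪ S := union_subset_union hX subset_rfl
  have hXindep : ρ X = #X := hρ.eq_card_of_subset subset_union_left hI hX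
  have hXspan : ρ (X ∪ S) = ρ (I ∪ S) :=
    le_antisymm (hρ.mono hXS subset_rfl) (hS ▸ hρ.mono subset_union_right hXS)
  have := hρ.mono subset_union_left hXZ
  have := hρ.mono hXZ subset_rfl
  have := hρ.le_card hXZ
  have := card_union_of_disjoint (hIS.mono hX hZ)
  simp only [contractRank]
  congr 2 <;> omega

end RankFunction

section Matroid

variable [Finite α] {M : Matroid α}

variable (M) in
lemma Matroid.cast_rankSet (X : Set α) : (M.rankSet X : ℕ∞) = M.eRk X := by
  have hne : {n | ∃ I ⊆ X, M.Indep I ∧ I.ncard = n}.Nonempty :=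
    ⟨0, ∅, empty_subset X, M.empty_indep, ncard_empty α⟩
  have hbdd : BddAbove {n | ∃ I ⊆ X, M.Indep I ∧ I.ncard = n} :=
    ⟨Nat.card α, fun _ ⟨I, _, _, hI⟩ ↦ hI ▸ ncard_le_card I⟩
  refine le_antisymm ?_ (eRk_le_iff.mpr fun I hIX hI ↦ ?_)
  · obtain ⟨I, hIX, hI, hcard⟩ := Nat.sSup_mem hne hbdd
    rw [Matroid.rankSet, ← hcard, (toFinite I).cast_ncard_eq]
    exact hI.encard_le_eRk_of_subset hIX
  · rw [← (toFinite I).cast_ncard_eq]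
    exact_mod_cast le_csSup hbdd ⟨I, hIX, hI, rfl⟩

variable (M) in
lemma Matroid.isRankFn_rankSet [DecidableEq α] (G : Finset α) :
    IsRankFn G (fun A ↦ M.rankSet ↑A) where
  le_card A _ := by
    rw [← Nat.cast_le (α := ℕ∞), M.cast_rankSet, ← encard_coe_eq_coe_finsetCard]
    exact M.eRk_le_encard _
  mono A B hAB _ := by
    rw [← Nat.cast_le (α := ℕ∞), M.cast_rankSet, M.cast_rankSet]
    exact M.eRk_mono (coe_subset.mpr hAB)
  submod A B _ _ := by
    rw [← Nat.cast_le (α := ℕ∞)]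
    push_cast [M.cast_rankSet]
    rw [add_comm]
    exact M.eRk_inter_add_eRk_union_le _ _

lemma Matroid.Indep.rankSet_eq {I : Finset α} (hI : M.Indep ↑I) : M.rankSet ↑I = #I := by
  rw [← Nat.cast_inj (R := ℕ∞), M.cast_rankSet, hI.eRk_eq_encard, encard_coe_eq_coe_finsetCard]

lemma Matroid.IsBase.rankSet_ground_eq {B : Finset α} (hB : M.IsBase ↑B) : M.rankSet M.E = #B := by
  rw [← Nat.cast_inj (R := ℕ∞), M.cast_rankSet, eRk_ground, ← hB.encard_eq_eRank,
    encard_coe_eq_coe_finsetCard]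

lemma Matroid.IsNonloop.rankSet_eq {e : α} (he : M.IsNonloop e) : M.rankSet {e} = 1 := by
  rw [← Nat.cast_inj (R := ℕ∞), M.cast_rankSet, he.eRk_eq, Nat.cast_one]

end Matroid

lemma Matroid.IsBase.compl_isBase_of_self_dual {M : Matroid α} {B : Set α} (hsd : M = M✶)
    (hB : M.IsBase B) : M.IsBase (M.E \ B) := by
  have h := hB.compl_isBase_dual
  rwa [← hsd] at h

lemma Matroid.loopless_of_self_dual {M : Matroid α} (hsd : M = M✶) : M.Loopless := by
  obtain ⟨B, hB⟩ := M.exists_isBase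
  refine loopless_iff_forall_isNonloop.mpr fun e he ↦ ?_
  by_cases heB : e ∈ B
  · exact hB.indep.isNonloop_of_mem heB
  · exact (hB.compl_isBase_of_self_dual hsd).indep.isNonloop_of_mem ⟨he, heB⟩

section Tutte

variable [Fintype α] {M : Matroid α} {x y : ℝ}

variable (M) in
lemma Matroid.tutte_eq_tutteSum (x y : ℝ) :
    M.tutte x y = tutteSum M.E.toFinite.toFinset (fun A ↦ M.rankSet ↑A) x y := by
  rw [Matroid.tutte, tutteSum, Finite.coe_toFinset]

variable (M) in
theorem Matroid.pow_rankSet_le_tutte [M.Loopless] (hx : 0 ≤ x) (hy : 0 ≤ y) :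
    x ^ M.rankSet M.E ≤ M.tutte x y := by
  classical
  have h := pow_rank_le_tutteSum (M.isRankFn_rankSet M.E.toFinite.toFinset)
    (fun e he ↦ by
      rw [coe_singleton]
      exact (M.isNonloop_of_loopless (Finite.mem_toFinset _ |>.mp he)).rankSet_eq) hx hy
  rwa [Finite.coe_toFinset, ← M.tutte_eq_tutteSum] at h

theorem Matroid.tutte_le_pow_of_self_dual (hsd : M = M✶) (hx : 2 ≤ x) (hy : 2 ≤ y) :
    M.tutte x y ≤ (2 * max x y) ^ M.rankSet M.E := by
  classical
  obtain ⟨B, hB⟩ : ∃ B : Finset α, M.IsBase ↑B := by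
    obtain ⟨B, hB⟩ := M.exists_isBase
    exact ⟨B.toFinite.toFinset, by rwa [Finite.coe_toFinset]⟩
  rw [M.tutte_eq_tutteSum]
  set E := M.E.toFinite.toFinset
  set S := E \ B
  have hBE : B ⊆ E := by rw [← Finset.coe_subset, Finite.coe_toFinset]; exact hB.subset_ground
  have hS : M.IsBase ↑S := by
    rw [coe_sdiff, Finite.coe_toFinset]; exact hB.compl_isBase_of_self_dual hsd
  have hE : B ∪ S = E := union_sdiff_of_subset hBE
  have hρ := M.isRankFn_rankSet E
  have hcon (X : Finset α) (hX : X ∈ B.powerset) :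
      IsRankFn S (contractRank (fun A ↦ M.rankSet ↑A) X) :=
    (hρ.contract ((Finset.mem_powerset.mp hX).trans hBE)).restrict
      (sdiff_subset_sdiff subset_rfl (Finset.mem_powerset.mp hX))
  have hBS : #B = #S := by rw [← hB.rankSet_ground_eq, hS.rankSet_ground_eq]
  have hsplit := tutteSum_union_eq_sum_contract (hE ▸ hρ) disjoint_sdiff hB.indep.rankSet_eq
    (by rw [hS.indep.rankSet_eq, hE, Finite.coe_toFinset, hS.rankSet_ground_eq]) x y
  rw [hE] at hsplit
  rw [hsplit]
  calc ∑ X ∈ B.powerset, tutteSum S (contractRank (fun A ↦ M.rankSet ↑A) X) x y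
      ≤ ∑ X ∈ B.powerset, max x y ^ #S :=
        sum_le_sum fun X hX ↦ tutteSum_le_max_pow_card (hcon X hX) hx hy
    _ = (2 * max x y) ^ M.rankSet M.E := by
        rw [sum_const, card_powerset, nsmul_eq_mul, mul_pow, hB.rankSet_ground_eq, hBS]
        push_cast
        ring

end Tutte

/-- If `M` is an identically self-dual matroid on a finite ground set, then
`max{T_M(2a,0), T_M(0,2a)} ≥ T_M(a,a)` for every real `a ≥ 2`. -/
theorem tutte_diag_le_max_of_self_dual [Fintype α] (M : Matroid α)
    (hsd : M = M✶) :
    ∀ a : ℝ, 2 ≤ a → M.tutte a a ≤ max (M.tutte (2 * a) 0) (M.tutte 0 (2 * a)) := by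
  intro a ha
  have := M.loopless_of_self_dual hsd
  calc M.tutte a a ≤ (2 * max a a) ^ M.rankSet M.E := M.tutte_le_pow_of_self_dual hsd ha ha
    _ = (2 * a) ^ M.rankSet M.E := by rw [max_self]
    _ ≤ M.tutte (2 * a) 0 := M.pow_rankSet_le_tutte (by linarith) le_rfl
    _ ≤ max (M.tutte (2 * a) 0) (M.tutte 0 (2 * a)) := le_max_left _ _
end

section
/- Let M be a coloopless paving matroid on a finite ground set such that for every element e of M, the deletion M\e has a coloop. Then T_M is convex along the portions of the lines x+y=p lying in the positive quadrant. -/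
open Matroid Set

variable {α : Type*}

/-- A circuit of a matroid: a minimal dependent set. -/
def Matroid.IsCircuitSet (M : Matroid α) (C : Set α) : Prop :=
  M.Dep C ∧ ∀ D, M.Dep D → D ⊆ C → D = C

/-- A matroid is paving if every circuit has size at least the rank of the matroid. -/
def Matroid.Paving (M : Matroid α) : Prop :=
  ∀ C, M.IsCircuitSet C → M.rankSet M.E ≤ C.ncard

/-- A matroid is coloopless if no element of the ground set lies in every basis. -/
def Matroid.Coloopless (M : Matroid α) : Prop :=
  ∀ e ∈ M.E, ¬ (∀ B, M.IsBase B → e ∈ B)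

/-- `T_M` is convex along the portions of the lines `x + y = p` lying in the
positive quadrant. -/
def Matroid.TutteConvexOnLines [Fintype α] (M : Matroid α) : Prop :=
  ∀ t x₁ y₁ x₂ y₂ : ℝ, 0 ≤ t → t ≤ 1 → 0 ≤ x₁ → 0 ≤ y₁ → 0 ≤ x₂ → 0 ≤ y₂ →
    x₁ + y₁ = x₂ + y₂ →
    M.tutte (t * x₁ + (1 - t) * x₂) (t * y₁ + (1 - t) * y₂) ≤
      t * M.tutte x₁ y₁ + (1 - t) * M.tutte x₂ y₂

/-- The deletion of an element from a matroid. -/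
noncomputable def Matroid.delElem (M : Matroid α) (e : α) : Matroid α :=
  M ↾ (M.E \ {e})


/-! ### Auxiliary lemmas -/

section PolyAux

/-- partial binomial sum `Σ_{j<m} C(n,j) (x-1)^(m-1-j)` -/
noncomputable def psum (x : ℝ) (n m : ℕ) : ℝ :=
  ∑ j ∈ Finset.range m, (n.choose j : ℝ) * (x - 1) ^ (m - 1 - j)

lemma psum_zero (x : ℝ) (n : ℕ) : psum x n 0 = 0 := by simp [psum]

lemma psum_succ_succ (x : ℝ) (n m : ℕ) :
    psum x (n + 1) (m + 1) = x * psum x n m + n.choose m := by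
  have shift : (x - 1) * psum x n m + (n.choose m : ℝ)
      = ∑ j ∈ Finset.range m, (n.choose (j+1) : ℝ) * (x-1)^(m-1-j) + (x-1)^m := by
    rw [psum, Finset.mul_sum]
    have h1 : ∀ j ∈ Finset.range m, (x-1) * ((n.choose j : ℝ) * (x-1)^(m-1-j))
        = (n.choose j : ℝ) * (x-1)^(m-j) := by
      intro j hj
      rw [Finset.mem_range] at hj
      rw [show m - j = (m - 1 - j) + 1 by omega, pow_succ]
      ring
    rw [Finset.sum_congr rfl h1]
    have h2 : ∑ j ∈ Finset.range (m+1), (n.choose j : ℝ) * (x-1)^(m-j)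
        = ∑ j ∈ Finset.range m, (n.choose (j+1) : ℝ) * (x-1)^(m-1-j) + (x-1)^m := by
      rw [Finset.sum_range_succ']
      congr 1
      · apply Finset.sum_congr rfl
        intro j hj
        rw [Finset.mem_range] at hj
        congr 2
        omega
      · simp
    rw [← h2, Finset.sum_range_succ]
    simp
  have key : ∀ j ∈ Finset.range m, ((n+1).choose (j+1) : ℝ) * (x-1)^(m+1-1-(j+1))
      = (n.choose j : ℝ) * (x-1)^(m-1-j) + (n.choose (j+1) : ℝ) * (x-1)^(m-1-j) := by
    intro j hj
    rw [Nat.choose_succ_succ', show m+1-1-(j+1) = m-1-j by omega]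
    push_cast
    ring
  rw [psum, Finset.sum_range_succ', Finset.sum_congr rfl key, Finset.sum_add_distrib]
  have h0 : ((n+1).choose 0 : ℝ) * (x-1)^(m+1-1-0) = (x-1)^m := by simp
  rw [h0]
  have hsum1 : ∑ j ∈ Finset.range m, (n.choose j : ℝ) * (x-1)^(m-1-j) = psum x n m := rfl
  rw [hsum1]
  have hx : x * psum x n m = (x-1) * psum x n m + psum x n m := by ring
  linarith [shift, hx]

lemma psum_diag (x : ℝ) : ∀ n, psum x n n = ∑ i ∈ Finset.range n, x ^ i := by
  intro n
  induction n with
  | zero => simp [psum]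
  | succ n ih =>
    rw [psum_succ_succ, ih, Nat.choose_self, Finset.sum_range_succ', Finset.mul_sum]
    have : ∀ j ∈ Finset.range n, x * x ^ j = x ^ (j+1) := by
      intro j _; rw [pow_succ]; ring
    rw [Finset.sum_congr rfl this]
    simp

lemma psum_off (x : ℝ) : ∀ n, (x - 1) * psum x (n + 2) n
    = (∑ i ∈ Finset.range (n + 1), ((n + 1 - i : ℕ) : ℝ) * x ^ i) - ((n+2).choose 2 : ℝ) := by
  intro n
  induction n with
  | zero => simp [psum]
  | succ n ih =>
    have h0 : (x-1) * psum x (n+1+2) (n+1)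
        = x * ((x-1) * psum x (n+2) n) + ((n+2).choose n : ℝ) * (x-1) := by
      rw [show n+1+2 = (n+2)+1 by omega, psum_succ_succ]
      ring
    rw [h0, ih]
    have hch : ((n+2).choose n : ℝ) = ((n+2).choose 2 : ℝ) := by
      have h := Nat.choose_symm (n := n+2) (k := 2) (by omega)
      rw [show n+2-2 = n by omega] at h
      exact_mod_cast h
    have hsh : ∑ i ∈ Finset.range (n + 2), ((n + 2 - i : ℕ) : ℝ) * x ^ i
        = (∑ i ∈ Finset.range (n+1), ((n + 1 - i : ℕ) : ℝ) * x ^ (i+1)) + ((n+2 : ℕ) : ℝ) := by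
      rw [Finset.sum_range_succ']
      congr 1
      · apply Finset.sum_congr rfl
        intro j hj
        congr 2
        omega
      · simp
    have hpas : ((n+1+2).choose 2 : ℝ) = ((n+2).choose 2 : ℝ) + ((n+2 : ℕ) : ℝ) := by
      rw [show n+1+2 = (n+2)+1 by omega, Nat.choose_succ_succ]
      push_cast [Nat.choose_one_right]
      ring
    rw [show n+1+1 = n+2 by omega, hsh, hpas, hch]
    rw [mul_sub, Finset.mul_sum]
    have : ∀ i ∈ Finset.range (n+1), x * (((n + 1 - i : ℕ) : ℝ) * x ^ i)
        = ((n + 1 - i : ℕ) : ℝ) * x ^ (i+1) := by intro i _; ring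
    rw [Finset.sum_congr rfl this]
    ring


lemma pow_jensen (i : ℕ) {t x₁ x₂ : ℝ} (ht : 0 ≤ t) (ht1 : t ≤ 1)
    (h1 : 0 ≤ x₁) (h2 : 0 ≤ x₂) :
    (t * x₁ + (1 - t) * x₂) ^ i ≤ t * x₁ ^ i + (1 - t) * x₂ ^ i := by
  have := (convexOn_pow (𝕜 := ℝ) i).2 (Set.mem_Ici.2 h1) (Set.mem_Ici.2 h2)
    ht (show (0:ℝ) ≤ 1 - t by linarith) (show t + (1 - t) = 1 by ring)
  simpa using this

lemma quad_jensen (a k : ℝ) {t x₁ y₁ x₂ y₂ : ℝ} (hak : k ≤ a + 1)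
    (ht : 0 ≤ t) (ht1 : t ≤ 1) (hsum : x₁ + y₁ = x₂ + y₂) :
    a * (t * x₁ + (1-t) * x₂)^2 + (t * y₁ + (1-t) * y₂)^2
      + k * (t * x₁ + (1-t) * x₂) * (t * y₁ + (1-t) * y₂)
    ≤ t * (a * x₁^2 + y₁^2 + k * x₁ * y₁) + (1-t) * (a * x₂^2 + y₂^2 + k * x₂ * y₂) := by
  have hy2 : y₂ = y₁ + x₁ - x₂ := by linarith
  subst hy2
  have h : 0 ≤ t * (1 - t) * ((a + 1 - k) * (x₁ - x₂)^2) :=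
    mul_nonneg (mul_nonneg ht (by linarith)) (mul_nonneg (by linarith) (sq_nonneg _))
  nlinarith [h]

lemma caseB_convex (r : ℕ) {t x₁ y₁ x₂ y₂ : ℝ}
    (ht : 0 ≤ t) (ht1 : t ≤ 1) (hx₁ : 0 ≤ x₁) (hx₂ : 0 ≤ x₂) :
    (∑ i ∈ Finset.range (r+1), (t*x₁+(1-t)*x₂)^i) + (t*y₁+(1-t)*y₂) - 1
    ≤ t * ((∑ i ∈ Finset.range (r+1), x₁^i) + y₁ - 1)
      + (1-t) * ((∑ i ∈ Finset.range (r+1), x₂^i) + y₂ - 1) := by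
  have hs : (∑ i ∈ Finset.range (r+1), (t*x₁+(1-t)*x₂)^i)
      ≤ t * (∑ i ∈ Finset.range (r+1), x₁^i) + (1-t) * (∑ i ∈ Finset.range (r+1), x₂^i) := by
    rw [Finset.mul_sum, Finset.mul_sum, ← Finset.sum_add_distrib]
    exact Finset.sum_le_sum fun i _ => pow_jensen i ht ht1 hx₁ hx₂
  nlinarith [hs]

lemma caseC_convex (r k : ℕ) (hr : 1 ≤ r) (hk : k ≤ r) {t x₁ y₁ x₂ y₂ : ℝ}
    (ht : 0 ≤ t) (ht1 : t ≤ 1) (hx₁ : 0 ≤ x₁) (hx₂ : 0 ≤ x₂)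
    (hsum : x₁ + y₁ = x₂ + y₂) :
    (∑ i ∈ Finset.range (r+1), ((r+1-i : ℕ) : ℝ) * (t*x₁+(1-t)*x₂)^i)
      + ((r:ℝ)+2) * ((t*y₁+(1-t)*y₂) - 1) + ((t*y₁+(1-t)*y₂) - 1)^2
      + (k:ℝ) * ((t*x₁+(1-t)*x₂) * (t*y₁+(1-t)*y₂)
          - (t*x₁+(1-t)*x₂) - (t*y₁+(1-t)*y₂))
    ≤ t * ((∑ i ∈ Finset.range (r+1), ((r+1-i : ℕ) : ℝ) * x₁^i)
        + ((r:ℝ)+2) * (y₁ - 1) + (y₁ - 1)^2 + (k:ℝ) * (x₁*y₁ - x₁ - y₁))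
      + (1-t) * ((∑ i ∈ Finset.range (r+1), ((r+1-i : ℕ) : ℝ) * x₂^i)
        + ((r:ℝ)+2) * (y₂ - 1) + (y₂ - 1)^2 + (k:ℝ) * (x₂*y₂ - x₂ - y₂)) := by
  have hsplit : ∀ x : ℝ, ∑ i ∈ Finset.range (r+1), ((r+1-i : ℕ) : ℝ) * x^i
      = (∑ i ∈ (Finset.range (r+1)).erase 2, ((r+1-i : ℕ) : ℝ) * x^i) + ((r:ℝ)-1) * x^2 := by
    intro x
    by_cases h2 : 2 ∈ Finset.range (r+1)
    · rw [← Finset.sum_erase_add _ _ h2]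
      congr 2
      have : (r+1-2 : ℕ) = r - 1 := by omega
      rw [this, Nat.cast_sub hr]
      simp
    · rw [Finset.erase_eq_of_notMem h2]
      have hr1 : r = 1 := by
        rw [Finset.mem_range] at h2
        omega
      subst hr1
      norm_num
  have hS : (∑ i ∈ (Finset.range (r+1)).erase 2, ((r+1-i : ℕ) : ℝ) * (t*x₁+(1-t)*x₂)^i)
      ≤ t * (∑ i ∈ (Finset.range (r+1)).erase 2, ((r+1-i : ℕ) : ℝ) * x₁^i)
        + (1-t) * (∑ i ∈ (Finset.range (r+1)).erase 2, ((r+1-i : ℕ) : ℝ) * x₂^i) := by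
    rw [Finset.mul_sum, Finset.mul_sum, ← Finset.sum_add_distrib]
    apply Finset.sum_le_sum
    intro i _
    have hj := pow_jensen i ht ht1 hx₁ hx₂
    have hw : (0:ℝ) ≤ ((r+1-i : ℕ) : ℝ) := Nat.cast_nonneg _
    nlinarith [mul_le_mul_of_nonneg_left hj hw]
  have hQ := quad_jensen ((r:ℝ)-1) (k:ℝ)
    (show (k:ℝ) ≤ ((r:ℝ)-1) + 1 by
      have : (k:ℝ) ≤ (r:ℝ) := Nat.cast_le.2 hk
      linarith) ht ht1 hsum
  rw [hsplit (t*x₁+(1-t)*x₂), hsplit x₁, hsplit x₂]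
  nlinarith [hS, hQ]


end PolyAux

section RankAux
variable [Fintype α] {M : Matroid α} {I J B X Y D : Set α} {e f : α}

lemma rks_bdd (M : Matroid α) (X : Set α) :
    BddAbove {n | ∃ I ⊆ X, M.Indep I ∧ I.ncard = n} := by
  refine ⟨Fintype.card α, ?_⟩
  rintro n ⟨J, _, _, rfl⟩
  exact (ncard_le_ncard (subset_univ J) (toFinite _)).trans
    (le_of_eq (by rw [ncard_univ, Nat.card_eq_fintype_card]))

lemma indep_ncard_le_rks (hJ : M.Indep J) (hJX : J ⊆ X) : J.ncard ≤ M.rankSet X :=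
  le_csSup (rks_bdd M X) ⟨J, hJX, hJ, rfl⟩

lemma rks_eq_of_basis' (hI : M.IsBasis' I X) : M.rankSet X = I.ncard := by
  have hne : {n | ∃ I ⊆ X, M.Indep I ∧ I.ncard = n}.Nonempty :=
    ⟨0, ∅, empty_subset X, M.empty_indep, ncard_empty α⟩
  apply le_antisymm
  · apply csSup_le hne
    rintro n ⟨J, hJX, hJi, rfl⟩
    obtain ⟨J', hJ', hJJ'⟩ := hJi.subset_isBasis'_of_subset hJX
    have h1 : J'.ncard = I.ncard := by
      have b1 := (Matroid.isBase_restrict_iff' (M := M) (X := X)).2 hJ'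
      have b2 := (Matroid.isBase_restrict_iff' (M := M) (X := X)).2 hI
      exact b1.ncard_eq_ncard_of_isBase b2
    exact (ncard_le_ncard hJJ' (toFinite _)).trans h1.le
  · exact indep_ncard_le_rks hI.indep hI.subset

lemma rks_indep (hI : M.Indep I) : M.rankSet I = I.ncard :=
  rks_eq_of_basis' hI.isBasis_self.isBasis'

lemma exists_basis'_rks (M : Matroid α) (X : Set α) :
    ∃ I, M.IsBasis' I X ∧ I.ncard = M.rankSet X := by
  obtain ⟨I, hI⟩ := M.exists_isBasis' X
  exact ⟨I, hI, (rks_eq_of_basis' hI).symm⟩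

lemma rks_le_ncard (M : Matroid α) (X : Set α) : M.rankSet X ≤ X.ncard := by
  obtain ⟨I, hI, hc⟩ := exists_basis'_rks M X
  rw [← hc]; exact ncard_le_ncard hI.subset (toFinite _)

lemma rks_mono (M : Matroid α) (hXY : X ⊆ Y) : M.rankSet X ≤ M.rankSet Y := by
  obtain ⟨I, hI, hc⟩ := exists_basis'_rks M X
  rw [← hc]; exact indep_ncard_le_rks hI.indep (hI.subset.trans hXY)

lemma rks_submod (M : Matroid α) (hX : X ⊆ M.E) (hY : Y ⊆ M.E) :
    M.rankSet (X ∪ Y) + M.rankSet (X ∩ Y) ≤ M.rankSet X + M.rankSet Y := by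
  obtain ⟨I, hI⟩ := M.exists_isBasis (X ∩ Y) ((inter_subset_left).trans hX)
  obtain ⟨J, hJ, hJI⟩ := hI.exists_isBasis_inter_eq_of_superset
    (inter_subset_left.trans subset_union_left) (union_subset hX hY)
  have hrU : M.rankSet (X ∪ Y) = J.ncard := rks_eq_of_basis' hJ.isBasis'
  have hrI : M.rankSet (X ∩ Y) = I.ncard := rks_eq_of_basis' hI.isBasis'
  have h1 : (J ∩ X).ncard ≤ M.rankSet X :=
    indep_ncard_le_rks (hJ.indep.inter_right X) inter_subset_right
  have h2 : (J ∩ Y).ncard ≤ M.rankSet Y :=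
    indep_ncard_le_rks (hJ.indep.inter_right Y) inter_subset_right
  have hu : (J ∩ X) ∪ (J ∩ Y) = J := by
    rw [← inter_union_distrib_left, inter_eq_left]; exact hJ.subset
  have hi : (J ∩ X) ∩ (J ∩ Y) = I := by
    rw [← hJI]; ext a; simp; tauto
  have key := ncard_union_add_ncard_inter (J ∩ X) (J ∩ Y) (toFinite _) (toFinite _)
  rw [hu, hi] at key
  omega



/-- every finite dependent set contains a circuit -/
lemma exists_circuitSet_subset (hD : M.Dep D) : ∃ C, C ⊆ D ∧ M.IsCircuitSet C := by
  obtain ⟨n, hn⟩ : ∃ n, D.ncard ≤ n := ⟨D.ncard, le_rfl⟩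
  induction n generalizing D with
  | zero =>
    rw [Nat.le_zero, ncard_eq_zero (toFinite D)] at hn
    exact absurd (hn ▸ hD).not_indep (not_not.2 M.empty_indep)
  | succ n ih =>
    by_cases h : ∀ D', M.Dep D' → D' ⊆ D → D' = D
    · exact ⟨D, subset_rfl, hD, h⟩
    · push_neg at h
      obtain ⟨D', hD', hD'D, hne⟩ := h
      have hlt : D'.ncard < D.ncard :=
        ncard_lt_ncard (ssubset_of_subset_of_ne hD'D hne) (toFinite D)
      obtain ⟨C, hCD', hC⟩ := ih hD' (by omega)
      exact ⟨C, hCD'.trans hD'D, hC⟩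

/-- paving: sets smaller than the rank are independent -/
lemma indep_of_small (hpav : M.Paving) (hX : X ⊆ M.E)
    (h : X.ncard < M.rankSet M.E) : M.Indep X := by
  by_contra hdep
  obtain ⟨C, hCX, hC⟩ := exists_circuitSet_subset ((M.not_indep_iff hX).1 hdep)
  have := hpav C hC
  have := ncard_le_ncard hCX (toFinite X)
  omega

/-- paving lower bound on rank -/
lemma rks_lower (hpav : M.Paving) (hX : X ⊆ M.E) {m : ℕ}
    (hm : m ≤ X.ncard) (hmr : m < M.rankSet M.E) : m ≤ M.rankSet X := by
  obtain ⟨Y, hYX, hY⟩ := Set.exists_subset_card_eq hm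
  have hind : M.Indep Y := indep_of_small hpav (hYX.trans hX) (hY ▸ hmr)
  exact hY ▸ indep_ncard_le_rks hind hYX

lemma rks_ground_base (hB : M.IsBase B) : M.rankSet M.E = B.ncard :=
  rks_eq_of_basis' hB.isBasis_ground.isBasis'

/-- coloopless: removing one point keeps the rank -/
lemma rks_compl_singleton (hcl : M.Coloopless) (he : e ∈ M.E) :
    M.rankSet (M.E \ {e}) = M.rankSet M.E := by
  have h := hcl e he
  push_neg at h
  obtain ⟨B, hB, heB⟩ := h
  apply le_antisymm (rks_mono M diff_subset)
  rw [rks_ground_base hB]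
  exact indep_ncard_le_rks hB.indep (subset_diff_singleton hB.subset_ground heB)

/-- an independent set of full size is a base -/
lemma base_of_indep_rks (hI : M.Indep I) (h : M.rankSet M.E ≤ I.ncard) : M.IsBase I := by
  obtain ⟨B, hB, hIB⟩ := hI.exists_isBase_superset
  have := rks_ground_base hB
  have : I = B := Set.eq_of_subset_of_ncard_le hIB (by omega) (toFinite B)
  exact this ▸ hB

/-- translation of the coloop-in-deletion hypothesis -/
lemma base_delElem_iff {R : Set α} : (M ↾ R).IsBase I ↔ M.IsBasis' I R :=
  Matroid.isBase_restrict_iff'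

/-- if the rank is zero, the empty set is a base of any restriction -/
lemma restrict_base_empty (hr : M.rankSet M.E = 0) (R : Set α) (hR : R ⊆ M.E) :
    (M ↾ R).IsBase ∅ := by
  rw [base_delElem_iff]
  refine ⟨⟨M.empty_indep, empty_subset R⟩, fun J hJ _ => ?_⟩
  have h1 : J.ncard ≤ M.rankSet M.E :=
    (indep_ncard_le_rks hJ.1 subset_rfl).trans (rks_mono M hJ.1.subset_ground)
  have : J = ∅ := (ncard_eq_zero (toFinite J)).1 (by omega)
  simp [this]

/-- with the deletion-coloop hypothesis, a nonempty ground set forces positive rank -/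
lemma rks_pos_of_hdel
    (h : ∃ f ∈ (M.delElem e).E, ∀ B, (M.delElem e).IsBase B → f ∈ B) :
    1 ≤ M.rankSet M.E := by
  by_contra hr
  obtain ⟨f, hf, hfB⟩ := h
  exact absurd (hfB ∅ (restrict_base_empty (by omega) _ diff_subset)) (by simp)

/-- translation of the coloop-in-deletion hypothesis -/
lemma hdel_translate
    (h : ∃ f ∈ (M.delElem e).E, ∀ B, (M.delElem e).IsBase B → f ∈ B) :
    ∃ f ∈ (M.E \ {e}), M.rankSet (M.E \ ({e} ∪ {f})) < M.rankSet M.E := by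
  obtain ⟨f, hf, hfB⟩ := h
  refine ⟨f, hf, ?_⟩
  by_contra hge
  push_neg at hge
  -- rank of E \ {e,f} equals rank of M
  obtain ⟨I, hI, hIc⟩ := exists_basis'_rks M (M.E \ ({e} ∪ {f}))
  have hIr : M.rankSet M.E ≤ I.ncard := hIc ▸ hge
  have hIbase : M.IsBase I := base_of_indep_rks hI.indep hIr
  have hIBasis' : M.IsBasis' I (M.E \ {e}) := by
    refine ⟨⟨hIbase.indep, hI.subset.trans (diff_subset_diff_right (by simp))⟩,
      fun J hJ hIJ => le_of_eq (hIbase.eq_of_subset_indep hJ.1 hIJ).symm⟩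
  have : f ∈ I := hfB I (base_delElem_iff.2 hIBasis')
  have : f ∉ I := fun hfI => by simpa using hI.subset hfI
  tauto



/-- a set whose rank is at least its size is independent -/
lemma indep_of_rks_ge (h : X.ncard ≤ M.rankSet X) : M.Indep X := by
  obtain ⟨I, hI, hIc⟩ := exists_basis'_rks M X
  have : I = X := Set.eq_of_subset_of_ncard_le hI.subset (by omega) (toFinite X)
  exact this ▸ hI.indep

/-- coloopless nonempty matroids have rank < size -/
lemma rks_lt_ncard_ground (hcl : M.Coloopless) (hne : M.E.Nonempty) :
    M.rankSet M.E < M.E.ncard := by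
  rcases lt_or_eq_of_le (rks_le_ncard M M.E) with h | h
  · exact h
  exfalso
  have hEi : M.Indep M.E := indep_of_rks_ge h.ge
  obtain ⟨e, he⟩ := hne
  have h2 := hcl e he
  push_neg at h2
  obtain ⟨B, hB, heB⟩ := h2
  have hBE : B = M.E := Set.eq_of_subset_of_ncard_le hB.subset_ground
    (by rw [← rks_ground_base hB, h]) (toFinite _)
  exact heB (hBE ▸ he)

/-- main size bound : n ≤ r + 2 -/
lemma ncard_ground_le (hpav : M.Paving) (hcl : M.Coloopless)
    (hdel : ∀ e ∈ M.E, ∃ f ∈ (M.delElem e).E, ∀ B, (M.delElem e).IsBase B → f ∈ B)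
    (hne : M.E.Nonempty) : M.E.ncard ≤ M.rankSet M.E + 2 := by
  set r := M.rankSet M.E with hr
  set n := M.E.ncard with hn
  by_contra hbig
  push_neg at hbig
  obtain ⟨e, he⟩ := hne
  have hrpos : 1 ≤ r := rks_pos_of_hdel (hdel e he)
  obtain ⟨f, hf, hA⟩ := hdel_translate (hdel e he)
  have hfE : f ∈ M.E := hf.1
  have hef : e ≠ f := fun h => hf.2 (by simp [h])
  have hPE : ({e} ∪ {f} : Set α) ⊆ M.E := union_subset (by simpa) (by simpa)
  have hPcard : ({e} ∪ {f} : Set α).ncard ≤ 2 := by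
    rw [singleton_union]
    exact (ncard_insert_le _ _).trans (by simp)
  -- pick e' outside {e, f}
  have hEP : (M.E \ ({e} ∪ {f})).ncard ≠ 0 := by
    rw [ncard_diff hPE (toFinite _)]
    omega
  obtain ⟨e', he'⟩ := nonempty_of_ncard_ne_zero hEP
  have he'E : e' ∈ M.E := he'.1
  have he'e : e' ≠ e := fun h => he'.2 (by simp [h])
  have he'f : e' ≠ f := fun h => he'.2 (by simp [h])
  obtain ⟨f', hf', hA'⟩ := hdel_translate (hdel e' he'E)
  have hf'E : f' ∈ M.E := hf'.1
  set P : Set α := {e} ∪ {f} with hP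
  set P' : Set α := {e'} ∪ {f'} with hP'
  have hP'E : P' ⊆ M.E := union_subset (by simpa) (by simpa)
  -- P ∩ P' ⊆ {f'}
  have hPPsub : P ∩ P' ⊆ {f'} := by
    rintro a ⟨haP, haP'⟩
    rcases haP' with h | h
    · rcases haP with h' | h' <;> simp_all
    · exact h
  -- rank of the union is full
  have hU : r ≤ M.rankSet (M.E \ P ∪ (M.E \ P')) := by
    rw [← diff_inter]
    calc r = M.rankSet (M.E \ {f'}) := (rks_compl_singleton hcl hf'E).symm
    _ ≤ _ := rks_mono M (diff_subset_diff_right hPPsub)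
  -- rank of the intersection is at least r - 1
  have hI : r - 1 ≤ M.rankSet (M.E \ P ∩ (M.E \ P')) := by
    rw [diff_inter_diff]
    apply rks_lower hpav diff_subset
    · rw [ncard_diff (union_subset hPE hP'E) (toFinite _)]
      have : (P ∪ P').ncard ≤ 4 := (ncard_union_le _ _).trans (by
        have : P'.ncard ≤ 2 := by
          rw [hP', singleton_union]
          exact (ncard_insert_le _ _).trans (by simp)
        omega)
      omega
    · omega
  have hsub := rks_submod M (diff_subset (s := M.E) (t := P))
    (diff_subset (s := M.E) (t := P'))
  omega

/-- two distinct non-spanning sets of size r cover the ground set (case n = r+2) -/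
lemma exc_union (hpav : M.Paving) (hcl : M.Coloopless)
    (hn : M.E.ncard = M.rankSet M.E + 2) {A A' : Set α}
    (hA : A ⊆ M.E) (hA' : A' ⊆ M.E)
    (hcA : A.ncard = M.rankSet M.E) (hcA' : A'.ncard = M.rankSet M.E)
    (hrA : M.rankSet A < M.rankSet M.E) (hrA' : M.rankSet A' < M.rankSet M.E)
    (hne : A ≠ A') : A ∪ A' = M.E := by
  set r := M.rankSet M.E with hr
  by_contra hcov
  have hAA'E : A ∪ A' ⊆ M.E := union_subset hA hA'
  obtain ⟨g, hgE, hgAA'⟩ := exists_of_ssubset (ssubset_of_subset_of_ne hAA'E hcov)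
  set P : Set α := M.E \ A with hP
  set P' : Set α := M.E \ A' with hP'
  have hrpos : 1 ≤ r := by omega
  have hPc : P.ncard = 2 := by rw [hP, ncard_diff hA (toFinite _)]; omega
  have hP'c : P'.ncard = 2 := by rw [hP', ncard_diff hA' (toFinite _)]; omega
  have hg : g ∈ P ∩ P' := ⟨⟨hgE, fun h => hgAA' (Or.inl h)⟩, ⟨hgE, fun h => hgAA' (Or.inr h)⟩⟩
  have hPP' : P ≠ P' := by
    intro h
    apply hne
    rw [← diff_diff_cancel_left hA, ← diff_diff_cancel_left hA', ← hP, ← hP', h]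
  -- P ∩ P' = {g}
  have hPPg : P ∩ P' = {g} := by
    apply subset_antisymm _ (by simpa using hg)
    rintro a ⟨haP, haP'⟩
    by_contra hag
    have h1 : ({g, a} : Set α) ⊆ P := insert_subset hg.1 (by simpa using haP)
    have h2 : ({g, a} : Set α) ⊆ P' := insert_subset hg.2 (by simpa using haP')
    have hga : ({g, a} : Set α).ncard = 2 := ncard_pair (Ne.symm (by simpa using hag))
    have e1 : ({g, a} : Set α) = P := Set.eq_of_subset_of_ncard_le h1 (by omega) (toFinite _)
    have e2 : ({g, a} : Set α) = P' := Set.eq_of_subset_of_ncard_le h2 (by omega) (toFinite _)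
    exact hPP' (e1 ▸ e2)
  have hunion : A ∪ A' = M.E \ {g} := by
    rw [← diff_diff_cancel_left hA, ← diff_diff_cancel_left hA', ← hP, ← hP',
      ← diff_inter, hPPg]
  have hinter : A ∩ A' = M.E \ (P ∪ P') := by
    rw [← diff_diff_cancel_left hA, ← diff_diff_cancel_left hA', ← hP, ← hP',
      diff_inter_diff]
  have hPuc : (P ∪ P').ncard = 3 := by
    have := ncard_union_add_ncard_inter P P' (toFinite _) (toFinite _)
    rw [hPPg] at this
    simp only [ncard_singleton] at this
    omega
  have hU : M.rankSet (A ∪ A') = r := by rw [hunion]; exact rks_compl_singleton hcl hgE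
  have hI : r - 1 ≤ M.rankSet (A ∩ A') := by
    rw [hinter]
    apply rks_lower hpav diff_subset
    · rw [ncard_diff (union_subset diff_subset diff_subset) (toFinite _), hPuc]
      omega
    · omega
  have hsub := rks_submod M hA hA'
  omega

/-- case n = r+1 : every proper subset of the ground set is independent -/
lemma caseB_indep (hcl : M.Coloopless) (hn : M.E.ncard = M.rankSet M.E + 1)
    {A : Set α} (hA : A ⊆ M.E) (hAne : A ≠ M.E) : M.Indep A := by
  obtain ⟨x, hxE, hxA⟩ := exists_of_ssubset (ssubset_of_subset_of_ne hA hAne)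
  have h1 : M.rankSet (M.E \ {x}) = M.rankSet M.E := rks_compl_singleton hcl hxE
  have h2 : (M.E \ {x}).ncard = M.rankSet M.E := by
    rw [ncard_diff (by simpa) (toFinite _)]
    simp
    omega
  have hind : M.Indep (M.E \ {x}) := indep_of_rks_ge (by omega)
  exact hind.subset (subset_diff_singleton hA hxA)


lemma tutte_empty (hE : M.E = ∅) (x y : ℝ) : M.tutte x y = 1 := by
  have hs : M.E.toFinite.toFinset = (∅ : Finset α) := by
    simp [Set.Finite.toFinset_eq_empty, hE]
  rw [Matroid.tutte, hs]
  have h0 : M.rankSet M.E = 0 := by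
    have := rks_le_ncard M M.E
    rw [hE] at this ⊢
    simpa using this
  have h0' : M.rankSet (↑(∅ : Finset α)) = 0 := by
    have := rks_le_ncard M (↑(∅ : Finset α))
    simpa using this
  simp [h0, h0']

/-- ranks in the case n = r + 1 -/
lemma tutteB (hcl : M.Coloopless) (hn : M.E.ncard = M.rankSet M.E + 1) (x y : ℝ) :
    M.tutte x y = (∑ i ∈ Finset.range (M.rankSet M.E + 1), x ^ i) + y - 1 := by
  classical
  set r := M.rankSet M.E with hr
  set s := M.E.toFinite.toFinset with hs
  have hsE : (↑s : Set α) = M.E := Set.Finite.coe_toFinset _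
  have hscard : s.card = r + 1 := by
    rw [← hn, hs, Set.ncard_eq_toFinset_card M.E M.E.toFinite]
  have hterm : ∀ A ∈ s.powerset,
      (x - 1) ^ (r - M.rankSet ↑A) * (y - 1) ^ (A.card - M.rankSet ↑A)
      = (x - 1) ^ (r - A.card) * (y - 1) ^ (A.card - r) := by
    intro A hA
    rw [Finset.mem_powerset] at hA
    have hAE : (↑A : Set α) ⊆ M.E := hsE ▸ Finset.coe_subset.2 hA
    have hAcard : (↑A : Set α).ncard = A.card := Set.ncard_coe_finset A
    by_cases hAs : A = s
    · have hAE' : (↑A : Set α) = M.E := by rw [hAs, hsE]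
      have h1 : M.rankSet ↑A = r := by rw [hAE']
      have h2 : A.card = r + 1 := by rw [hAs, hscard]
      rw [h1, h2, show r - r = 0 by omega, show r - (r+1) = 0 by omega]
    · have hind : M.Indep ↑A := caseB_indep hcl hn hAE
        (fun h => hAs (Finset.coe_injective (h.trans hsE.symm)))
      have h1 : M.rankSet ↑A = A.card := by rw [rks_indep hind, hAcard]
      have hle : A.card ≤ r := by
        have : A.card < s.card :=
          Finset.card_lt_card (lt_of_le_of_ne hA hAs)
        omega
      rw [h1, show A.card - A.card = 0 by omega, show A.card - r = 0 by omega]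
  rw [Matroid.tutte, ← hr, ← hs, Finset.sum_congr rfl hterm]
  have hg := Finset.sum_powerset_apply_card
    (f := fun j => (x - 1) ^ (r - j) * (y - 1) ^ (j - r)) (x := s)
  rw [hg, hscard]
  rw [Finset.sum_range_succ]
  have hlast : (r+1).choose (r+1) • ((x - 1) ^ (r - (r+1)) * (y - 1) ^ ((r+1) - r))
      = y - 1 := by
    rw [Nat.choose_self, show r - (r+1) = 0 by omega, show r + 1 - r = 1 by omega]
    simp
  rw [hlast]
  have hmain : ∑ j ∈ Finset.range (r+1), (r+1).choose j • ((x - 1) ^ (r - j) * (y - 1) ^ (j - r))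
      = psum x (r+1) (r+1) := by
    rw [psum]
    apply Finset.sum_congr rfl
    intro j hj
    rw [Finset.mem_range] at hj
    rw [show j - r = 0 by omega, show r + 1 - 1 - j = r - j by omega, nsmul_eq_mul]
    ring
  rw [hmain, psum_diag]
  ring

open scoped Classical in
/-- the count of non-spanning r-sets is at most r, in case n = r+2 -/
lemma k_le_r (hpav : M.Paving) (hcl : M.Coloopless)
    (hn : M.E.ncard = M.rankSet M.E + 2) (hr : 1 ≤ M.rankSet M.E) :
    ((M.E.toFinite.toFinset.powerset).filter
      (fun A : Finset α => A.card = M.rankSet M.E ∧ ¬ M.Indep (↑A : Set α))).card ≤ M.rankSet M.E := by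
  classical
  set r := M.rankSet M.E with hrdef
  set s := M.E.toFinite.toFinset with hs
  have hsE : (↑s : Set α) = M.E := Set.Finite.coe_toFinset _
  have hscard : s.card = r + 2 := by
    rw [← hn, hs, Set.ncard_eq_toFinset_card M.E M.E.toFinite]
  set F := (s.powerset).filter (fun A : Finset α => A.card = r ∧ ¬ M.Indep (↑A : Set α)) with hF
  -- facts about members of F
  have hmem : ∀ A ∈ F, A ⊆ s ∧ A.card = r ∧ M.rankSet ↑A < r := by
    intro A hA
    rw [hF, Finset.mem_filter, Finset.mem_powerset] at hA
    obtain ⟨hAs, hAc, hAind⟩ := hA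
    refine ⟨hAs, hAc, ?_⟩
    have h1 : M.rankSet ↑A ≤ A.card := by
      have := rks_le_ncard M (↑A : Set α)
      rwa [Set.ncard_coe_finset] at this
    rcases lt_or_eq_of_le h1 with h | h
    · omega
    · exact absurd (indep_of_rks_ge (by rw [h, Set.ncard_coe_finset])) hAind
  -- complements are pairwise disjoint
  have hdisj : ∀ A ∈ F, ∀ A' ∈ F, A ≠ A' → Disjoint (s \ A) (s \ A') := by
    intro A hA A' hA' hne
    obtain ⟨hAs, hAc, hArk⟩ := hmem A hA
    obtain ⟨hA's, hA'c, hA'rk⟩ := hmem A' hA'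
    have hexc := exc_union hpav hcl hn
      (show (↑A : Set α) ⊆ M.E from hsE ▸ Finset.coe_subset.2 hAs)
      (show (↑A' : Set α) ⊆ M.E from hsE ▸ Finset.coe_subset.2 hA's)
      (by rw [Set.ncard_coe_finset]; exact hAc)
      (by rw [Set.ncard_coe_finset]; exact hA'c)
      hArk hA'rk (fun h => hne (Finset.coe_injective h))
    rw [Finset.disjoint_left]
    intro a ha ha'
    rw [Finset.mem_sdiff] at ha ha'
    have : a ∈ (↑A : Set α) ∪ (↑A' : Set α) := by
      rw [hexc, ← hsE]; exact ha.1
    rcases this with h | h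
    · exact ha.2 h
    · exact ha'.2 h
  have hcard2 : ∀ A ∈ F, (s \ A).card = 2 := by
    intro A hA
    obtain ⟨hAs, hAc, _⟩ := hmem A hA
    rw [Finset.card_sdiff_of_subset hAs, hscard, hAc]
    omega
  have hbi : (F.biUnion (fun A => s \ A)).card = 2 * F.card := by
    rw [Finset.card_biUnion hdisj]
    rw [Finset.sum_congr rfl hcard2]
    simp [mul_comm]
  have hsub : (F.biUnion (fun A => s \ A)).card ≤ s.card :=
    Finset.card_le_card (Finset.biUnion_subset.2 fun A _ => Finset.sdiff_subset)
  rw [hscard] at hsub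
  omega

open scoped Classical in
/-- the tutte polynomial in the case n = r + 2 -/
lemma tutteC (hpav : M.Paving) (hcl : M.Coloopless)
    (hn : M.E.ncard = M.rankSet M.E + 2) (hr : 1 ≤ M.rankSet M.E) (x y : ℝ) :
    M.tutte x y = (∑ i ∈ Finset.range (M.rankSet M.E + 1),
        ((M.rankSet M.E + 1 - i : ℕ) : ℝ) * x ^ i)
      + ((M.rankSet M.E : ℝ) + 2) * (y - 1) + (y - 1)^2
      + ((((M.E.toFinite.toFinset.powerset).filter
          (fun A : Finset α => A.card = M.rankSet M.E ∧ ¬ M.Indep (↑A : Set α))).card : ℝ))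
        * (x * y - x - y) := by
  classical
  set r := M.rankSet M.E with hrdef
  set s := M.E.toFinite.toFinset with hs
  have hsE : (↑s : Set α) = M.E := Set.Finite.coe_toFinset _
  have hscard : s.card = r + 2 := by
    rw [← hn, hs, Set.ncard_eq_toFinset_card M.E M.E.toFinite]
  set F := (s.powerset).filter (fun A : Finset α => A.card = r ∧ ¬ M.Indep (↑A : Set α)) with hF
  -- rank facts
  have hrank : ∀ A ∈ s.powerset, (A.card ≤ r → ¬ (A.card = r ∧ ¬ M.Indep ↑A) →
      M.rankSet ↑A = A.card) ∧ ((A.card = r ∧ ¬ M.Indep ↑A) → M.rankSet ↑A = r - 1)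
      ∧ (r < A.card → M.rankSet ↑A = r) := by
    intro A hA
    rw [Finset.mem_powerset] at hA
    have hAE : (↑A : Set α) ⊆ M.E := hsE ▸ Finset.coe_subset.2 hA
    have hAcard : (↑A : Set α).ncard = A.card := Set.ncard_coe_finset A
    have hAle : A.card ≤ r + 2 := by
      have := Finset.card_le_card hA
      omega
    refine ⟨?_, ?_, ?_⟩
    · intro hle hnot
      by_cases hcr : A.card = r
      · push_neg at hnot
        have hind := hnot hcr
        rw [rks_indep hind, hAcard]
      · have hind : M.Indep ↑A := indep_of_small hpav hAE (by omega)
        rw [rks_indep hind, hAcard]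
    · rintro ⟨hcr, hind⟩
      have h1 : M.rankSet ↑A ≤ A.card := by
        have := rks_le_ncard M (↑A : Set α); omega
      have h2 : M.rankSet ↑A ≠ r := by
        intro h
        exact hind (indep_of_rks_ge (by rw [h, hAcard, hcr]))
      have h3 : r - 1 ≤ M.rankSet ↑A := rks_lower hpav hAE (by omega) (by omega)
      omega
    · intro hgt
      apply le_antisymm
      · exact rks_mono M hAE
      rcases Nat.lt_or_ge A.card (r + 2) with hc | hc
      · -- A.card = r + 1 : complement is a singleton
        have hcompl : (M.E \ ↑A).ncard = 1 := by
          rw [Set.ncard_diff hAE (Set.toFinite _), hAcard]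
          omega
        obtain ⟨z, hz⟩ := Set.ncard_eq_one.1 hcompl
        have hzE : z ∈ M.E := by
          have : z ∈ M.E \ ↑A := by rw [hz]; exact rfl
          exact this.1
        have hAeq : (↑A : Set α) = M.E \ {z} := by
          rw [← hz, Set.diff_diff_cancel_left hAE]
        rw [hAeq, rks_compl_singleton hcl hzE]
      · -- A = s
        have hAs : A = s := Finset.eq_of_subset_of_card_le hA (by omega)
        have : (↑A : Set α) = M.E := by rw [hAs, hsE]
        rw [this]
  -- termwise rewrite
  have hterm : ∀ A ∈ s.powerset,
      (x - 1) ^ (r - M.rankSet ↑A) * (y - 1) ^ (A.card - M.rankSet ↑A)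
      = (x - 1) ^ (r - A.card) * (y - 1) ^ (A.card - r)
        + (if A.card = r ∧ ¬ M.Indep ↑A then ((x-1)*(y-1) - 1) else 0) := by
    intro A hA
    obtain ⟨hsmall, hexc, hbig⟩ := hrank A hA
    by_cases hP : A.card = r ∧ ¬ M.Indep ↑A
    · rw [if_pos hP, hexc hP, hP.1, show r - (r-1) = 1 by omega,
        show r - r = 0 by omega]
      ring
    · rw [if_neg hP, add_zero]
      rcases Nat.lt_or_ge r A.card with h | h
      · rw [hbig h, show r - r = 0 by omega, show r - A.card = 0 by omega]
      · rw [hsmall h hP, show A.card - A.card = 0 by omega,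
          show A.card - r = 0 by omega]
  rw [Matroid.tutte, ← hrdef, ← hs, Finset.sum_congr rfl hterm, Finset.sum_add_distrib]
  -- the correction sum
  have hcorr : ∑ A ∈ s.powerset, (if A.card = r ∧ ¬ M.Indep ↑A then ((x-1)*(y-1) - 1) else 0)
      = (F.card : ℝ) * ((x-1)*(y-1) - 1) := by
    rw [← Finset.sum_filter, ← hF, Finset.sum_const, nsmul_eq_mul]
  rw [hcorr]
  -- the uniform sum
  have hg := Finset.sum_powerset_apply_card
    (f := fun j => (x - 1) ^ (r - j) * (y - 1) ^ (j - r)) (x := s)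
  rw [hg, hscard]
  rw [Finset.sum_range_succ, Finset.sum_range_succ, Finset.sum_range_succ]
  have e2 : (r+2).choose (r+2) • ((x - 1) ^ (r - (r+2)) * (y - 1) ^ ((r+2) - r))
      = (y-1)^2 := by
    rw [Nat.choose_self, show r - (r+2) = 0 by omega, show r + 2 - r = 2 by omega]
    simp
  have e1 : (r+2).choose (r+1) • ((x - 1) ^ (r - (r+1)) * (y - 1) ^ ((r+1) - r))
      = ((r : ℝ) + 2) * (y - 1) := by
    have hch : (r+2).choose (r+1) = r+2 := by
      have h := Nat.choose_symm (n := r+2) (k := 1) (by omega)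
      rw [show r+2-1 = r+1 by omega, Nat.choose_one_right] at h
      exact h
    rw [hch, show r - (r+1) = 0 by omega, show r + 1 - r = 1 by omega, nsmul_eq_mul]
    push_cast
    ring
  have e0 : (r+2).choose r • ((x - 1) ^ (r - r) * (y - 1) ^ (r - r))
      = ((r+2).choose 2 : ℝ) := by
    have hch : (r+2).choose r = (r+2).choose 2 := by
      have h := Nat.choose_symm (n := r+2) (k := 2) (by omega)
      rwa [show r+2-2 = r by omega] at h
    rw [hch, show r - r = 0 by omega, nsmul_eq_mul]
    simp
  rw [e2, e1, e0]
  have emain : ∑ j ∈ Finset.range r, (r+2).choose j • ((x - 1) ^ (r - j) * (y - 1) ^ (j - r))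
      = (x - 1) * psum x (r+2) r := by
    rw [psum, Finset.mul_sum]
    apply Finset.sum_congr rfl
    intro j hj
    rw [Finset.mem_range] at hj
    rw [show j - r = 0 by omega, nsmul_eq_mul, pow_zero, mul_one,
      show r - j = (r - 1 - j) + 1 by omega, pow_succ]
    ring
  rw [emain, psum_off]
  ring


end RankAux

/-- Let `M` be a coloopless paving matroid on a finite ground set such that for every
element `e` the deletion `M \ e` has a coloop. Then `T_M` is convex along the portions
of the lines `x + y = p` lying in the positive quadrant. -/
theorem tutteConvexOnLines_of_all_deletions_have_coloop [Fintype α] (M : Matroid α)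
    (hpav : M.Paving) (hcl : M.Coloopless)
    (hdel : ∀ e ∈ M.E, ∃ f ∈ (M.delElem e).E, ∀ B, (M.delElem e).IsBase B → f ∈ B) :
    M.TutteConvexOnLines := by
  classical
  intro t x₁ y₁ x₂ y₂ ht ht1 hx₁ hy₁ hx₂ hy₂ hsum
  rcases Set.eq_empty_or_nonempty M.E with hE | hne
  · rw [tutte_empty hE, tutte_empty hE, tutte_empty hE]
    linarith
  · obtain ⟨e, he⟩ := hne
    have hr1 : 1 ≤ M.rankSet M.E := rks_pos_of_hdel (hdel e he)
    have hlt : M.rankSet M.E < M.E.ncard := rks_lt_ncard_ground hcl ⟨e, he⟩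
    have hle2 : M.E.ncard ≤ M.rankSet M.E + 2 := ncard_ground_le hpav hcl hdel ⟨e, he⟩
    rcases (show M.E.ncard = M.rankSet M.E + 1 ∨ M.E.ncard = M.rankSet M.E + 2 by omega)
      with hn | hn
    · rw [tutteB hcl hn, tutteB hcl hn, tutteB hcl hn]
      exact caseB_convex _ ht ht1 hx₁ hx₂
    · have hk := k_le_r hpav hcl hn hr1
      rw [tutteC hpav hcl hn hr1, tutteC hpav hcl hn hr1, tutteC hpav hcl hn hr1]
      exact caseC_convex _ _ hr1 hk ht ht1 hx₁ hx₂ hsum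
end
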